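/- arXiv:2006.07757 — 6 statements merged into one kernel-verified Lean document; each statement's English description precedes it below -/
import Mathlib

section
/- If the assignment a satisfies the 3-SAT instance Γ, then the subset T = S_a ∪ Q of P_Γ has cardinality n − z and is separated from the origin with margin width 1/√(l+1); concretely, the unit vector w = t_a/‖t_a‖ satisfies ⟨w, x⟩ ≥ 1/√(l+1) for every x ∈ T. -/
/-!
The vector `v = (a, 1) = (l + 1) • t_a` has norm `√(l + 1)`, and `⟪v, x⟫ ≥ 1` for every `x ∈ T`:
the inner product is exactly `1` on `S_a`, and for a clause point it is
`α · ∑ₖ sₖ a(iₖ) + 3α ≥ α · (1 - 2) + 3α = 2α > 1`, because a satisfied clause has a literal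
contributing `+1` and the other two contribute at least `-1`. Normalising `v` divides these inner
products by `√(l + 1)`. The clause points have last coordinate `3α ∉ {0, 1}`, so they are not in
`S_a`, whence `|T| = (l + 1) + m`.
-/

open EuclideanSpace

lemma div_norm_le_inner_normalize {E : Type*} [NormedAddCommGroup E] [InnerProductSpace ℝ E]
    {v x : E} {c : ℝ} (h : c ≤ inner ℝ v x) : c / ‖v‖ ≤ inner ℝ (NormedSpace.normalize v) x := by
  rw [NormedSpace.normalize, real_inner_smul_left, div_eq_inv_mul]
  exact mul_le_mul_of_nonneg_left h (inv_nonneg.mpr (norm_nonneg v))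

lemma two_sub_card_le_sum_mul_of_exists_eq {ι : Type*} [Fintype ι] {s b : ι → ℝ}
    (hs : ∀ k, s k = 1 ∨ s k = -1) (hb : ∀ k, b k = 1 ∨ b k = -1) (h : ∃ k, b k = s k) :
    2 - Fintype.card ι ≤ ∑ k, s k * b k := by
  have hterm : ∀ k, 0 ≤ s k * b k + 1 := fun k ↦ by
    rcases hs k with h | h <;> rcases hb k with h' | h' <;> norm_num [h, h']
  obtain ⟨k, hk⟩ := h
  have hone : s k * b k = 1 := by rw [hk]; rcases hs k with h | h <;> norm_num [h]
  have : 2 ≤ ∑ k, (s k * b k + 1) := calc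
    2 = s k * b k + 1 := by rw [hone]; norm_num
    _ ≤ ∑ k, (s k * b k + 1) := Finset.single_le_sum (fun k _ ↦ hterm k) (Finset.mem_univ k)
  rw [Finset.sum_add_distrib] at this
  simp only [Finset.sum_const, Finset.card_univ, nsmul_eq_mul, mul_one] at this
  linarith

variable {l : ℕ}

noncomputable def homogenize (a : Fin l → ℝ) : EuclideanSpace ℝ (Fin (l + 1)) :=
  ∑ i, a i • single i.castSucc 1 + single (Fin.last l) 1

noncomputable def clausePoint (α : ℝ) (g : Fin 3 → Fin l) (s : Fin 3 → ℝ) :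
    EuclideanSpace ℝ (Fin (l + 1)) :=
  ∑ k, (s k * α) • single (g k).castSucc 1 + (3 * α) • single (Fin.last l) 1

def assignmentPoints (a : Fin l → ℝ) : Set (EuclideanSpace ℝ (Fin (l + 1))) :=
  Set.range (fun i ↦ a i • single i.castSucc 1) ∪ {single (Fin.last l) 1}

@[simp]
lemma homogenize_apply_castSucc (a : Fin l → ℝ) (i : Fin l) : homogenize a i.castSucc = a i := by
  simp [homogenize, Pi.single_apply]

@[simp]
lemma homogenize_apply_last (a : Fin l → ℝ) : homogenize a (Fin.last l) = 1 := by
  simp [homogenize, Fin.castSucc_ne_last]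

lemma norm_homogenize {a : Fin l → ℝ} (ha : ∀ i, a i = 1 ∨ a i = -1) :
    ‖homogenize a‖ = √((l : ℝ) + 1) := by
  have hsq : ∀ i, a i ^ 2 = 1 := fun i ↦ by rcases ha i with h | h <;> norm_num [h]
  simp [EuclideanSpace.norm_eq, Fin.sum_univ_castSucc, hsq]

lemma inner_homogenize_clausePoint (a : Fin l → ℝ) (α : ℝ) (g : Fin 3 → Fin l) (s : Fin 3 → ℝ) :
    inner ℝ (homogenize a) (clausePoint α g s) = α * ∑ k, s k * a (g k) + 3 * α := by
  simp only [clausePoint, inner_add_right, inner_sum, real_inner_smul_right, inner_single_right,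
    homogenize_apply_castSucc, homogenize_apply_last, conj_trivial, mul_one, Finset.mul_sum]
  exact congrArg (· + 3 * α) (Finset.sum_congr rfl fun k _ ↦ by ring)

lemma one_le_inner_homogenize_of_mem_assignmentPoints {a : Fin l → ℝ}
    (ha : ∀ i, a i = 1 ∨ a i = -1) {x : EuclideanSpace ℝ (Fin (l + 1))}
    (hx : x ∈ assignmentPoints a) : 1 ≤ inner ℝ (homogenize a) x := by
  rcases hx with ⟨i, rfl⟩ | rfl
  · rcases ha i with h | h <;> simp [inner_single_right, h]
  · simp [inner_single_right]

lemma clausePoint_apply_last (α : ℝ) (g : Fin 3 → Fin l) (s : Fin 3 → ℝ) :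
    clausePoint α g s (Fin.last l) = 3 * α := by
  simp [clausePoint, Fin.castSucc_ne_last]

lemma apply_last_of_mem_assignmentPoints {a : Fin l → ℝ} {x : EuclideanSpace ℝ (Fin (l + 1))}
    (hx : x ∈ assignmentPoints a) : x (Fin.last l) = 0 ∨ x (Fin.last l) = 1 := by
  rcases hx with ⟨i, rfl⟩ | rfl
  · simp [Fin.castSucc_ne_last]
  · simp

lemma ncard_assignmentPoints {a : Fin l → ℝ} (ha : ∀ i, a i ≠ 0) :
    (assignmentPoints a).ncard = l + 1 := by
  have hinj : Function.Injective (fun i ↦ a i • single i.castSucc (1 : ℝ)) := by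
    intro i j hij
    have := congrArg (fun x : EuclideanSpace ℝ (Fin (l + 1)) ↦ x i.castSucc) hij
    by_contra hne
    simp [hne, ha i] at this
  have hlast :
      single (Fin.last l) (1 : ℝ) ∉ Set.range (fun i ↦ a i • single i.castSucc (1 : ℝ)) := by
    rintro ⟨i, hi⟩
    have := congrArg (fun x : EuclideanSpace ℝ (Fin (l + 1)) ↦ x (Fin.last l)) hi
    simp [Fin.castSucc_ne_last] at this
  rw [assignmentPoints, Set.ncard_union_eq (Set.disjoint_singleton_right.mpr hlast)
    (Set.finite_range _) (Set.finite_singleton _), Set.ncard_range_of_injective hinj]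
  simp

lemma one_le_inner_homogenize_clausePoint {a : Fin l → ℝ} (ha : ∀ i, a i = 1 ∨ a i = -1)
    {α : ℝ} (hα : 1 / 2 < α) {g : Fin 3 → Fin l} {s : Fin 3 → ℝ} (hs : ∀ k, s k = 1 ∨ s k = -1)
    (hsat : ∃ k, a (g k) = s k) : 1 ≤ inner ℝ (homogenize a) (clausePoint α g s) := by
  have hsum := two_sub_card_le_sum_mul_of_exists_eq hs (fun k ↦ ha (g k)) hsat
  norm_num at hsum
  rw [inner_homogenize_clausePoint]
  nlinarith

lemma clausePoint_notMem_assignmentPoints (a : Fin l → ℝ) {α : ℝ} (hα : 1 / 2 < α)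
    (g : Fin 3 → Fin l) (s : Fin 3 → ℝ) : clausePoint α g s ∉ assignmentPoints a := by
  intro h
  rcases apply_last_of_mem_assignmentPoints h with h | h <;>
    rw [clausePoint_apply_last] at h <;> linarith

theorem satisfying_assignment_gives_margin_general
    (l m : ℕ) (α : ℝ) (hα : 1 / 2 < α)
    -- the 3-SAT instance: clause j has literals (var j k, sgn j k) for k : Fin 3
    (var : Fin m → Fin 3 → Fin l) (sgn : Fin m → Fin 3 → ℝ)
    (hsgn : ∀ j k, sgn j k = 1 ∨ sgn j k = -1)
    -- the assignment
    (a : Fin l → ℝ) (ha : ∀ i, a i = 1 ∨ a i = -1)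
    -- the points q_j
    (q : Fin m → EuclideanSpace ℝ (Fin (l + 1)))
    (hq : ∀ j, q j =
      (∑ k : Fin 3, (sgn j k * α) • EuclideanSpace.single ((var j k).castSucc) (1 : ℝ))
        + (3 * α) • EuclideanSpace.single (Fin.last l) (1 : ℝ))
    (hqinj : Function.Injective q)
    -- a satisfies Γ
    (hsat : ∀ j : Fin m, ∃ k : Fin 3, a (var j k) = sgn j k)
    -- the sets S_a and T = S_a ∪ Q
    (S T : Set (EuclideanSpace ℝ (Fin (l + 1))))
    (hS : S = (Set.range fun i : Fin l => a i • EuclideanSpace.single i.castSucc (1 : ℝ))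
        ∪ {EuclideanSpace.single (Fin.last l) (1 : ℝ)})
    (hT : T = S ∪ Set.range q)
    -- the centroid t_a of S_a
    (t : EuclideanSpace ℝ (Fin (l + 1)))
    (ht : t = ((l : ℝ) + 1)⁻¹ •
      ((∑ i : Fin l, a i • EuclideanSpace.single i.castSucc (1 : ℝ))
        + EuclideanSpace.single (Fin.last l) (1 : ℝ))) :
    T.ncard = 2 * (l + 1) + m - (l + 1) ∧ ‖‖t‖⁻¹ • t‖ = 1 ∧
      ∀ x ∈ T, @inner ℝ _ _ (‖t‖⁻¹ • t) x ≥ 1 / Real.sqrt ((l : ℝ) + 1) := by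
  have hq : ∀ j, q j = clausePoint α (var j) (sgn j) := hq
  have hS : S = assignmentPoints a := hS
  have hnorm : ‖homogenize a‖ = √((l : ℝ) + 1) := norm_homogenize ha
  have hdir : ‖t‖⁻¹ • t = NormedSpace.normalize (homogenize a) :=
    ht ▸ NormedSpace.normalize_smul_of_pos (by positivity) _
  refine ⟨?_, ?_, ?_⟩
  · have hdisj : Disjoint S (Set.range q) := Set.disjoint_right.mpr <| by
      rintro _ ⟨j, rfl⟩
      exact hS ▸ hq j ▸ clausePoint_notMem_assignmentPoints a hα (var j) (sgn j)
    have hfin : S.Finite := hS ▸ (Set.finite_range _).union (Set.finite_singleton _)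
    rw [hT, Set.ncard_union_eq hdisj hfin (Set.finite_range q), Set.ncard_range_of_injective hqinj,
      hS, ncard_assignmentPoints fun i ↦ by rcases ha i with h | h <;> norm_num [h],
      Nat.card_fin]
    omega
  · rw [hdir]
    exact NormedSpace.norm_normalize (norm_pos_iff.mp (hnorm ▸ by positivity))
  · intro x hx
    rw [hdir, ← hnorm]
    refine div_norm_le_inner_normalize ?_
    rcases hT ▸ hx with hx | ⟨j, rfl⟩
    · exact one_le_inner_homogenize_of_mem_assignmentPoints ha (hS ▸ hx)
    · exact hq j ▸ one_le_inner_homogenize_clausePoint ha hα (hsgn j) (hsat j)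

/-- If the assignment `a` satisfies the 3-SAT instance `Γ`, then the subset
`T = S_a ∪ Q` of `P_Γ` has cardinality `n − z` and is separated from the origin with margin
width `1/√(l+1)`; concretely, the unit vector `w = t_a/‖t_a‖` satisfies `⟨w, x⟩ ≥ 1/√(l+1)`
for every `x ∈ T`. -/
theorem satisfying_assignment_gives_margin
    (l m : ℕ) (hl : 1 ≤ l) (hm : 1 ≤ m) (α : ℝ) (hα : 1 / 2 < α)
    -- the 3-SAT instance: clause j has literals (var j k, sgn j k) for k : Fin 3
    (var : Fin m → Fin 3 → Fin l) (sgn : Fin m → Fin 3 → ℝ)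
    (hsgn : ∀ j k, sgn j k = 1 ∨ sgn j k = -1)
    (hvar : ∀ j, Function.Injective (var j))
    -- the assignment
    (a : Fin l → ℝ) (ha : ∀ i, a i = 1 ∨ a i = -1)
    -- the points q_j
    (q : Fin m → EuclideanSpace ℝ (Fin (l + 1)))
    (hq : ∀ j, q j =
      (∑ k : Fin 3, (sgn j k * α) • EuclideanSpace.single ((var j k).castSucc) (1 : ℝ))
        + (3 * α) • EuclideanSpace.single (Fin.last l) (1 : ℝ))
    (hqinj : Function.Injective q)
    -- a satisfies Γ
    (hsat : ∀ j : Fin m, ∃ k : Fin 3, a (var j k) = sgn j k)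
    -- the sets S_a and T = S_a ∪ Q
    (S T : Set (EuclideanSpace ℝ (Fin (l + 1))))
    (hS : S = (Set.range fun i : Fin l => a i • EuclideanSpace.single i.castSucc (1 : ℝ))
        ∪ {EuclideanSpace.single (Fin.last l) (1 : ℝ)})
    (hT : T = S ∪ Set.range q)
    -- the centroid t_a of S_a
    (t : EuclideanSpace ℝ (Fin (l + 1)))
    (ht : t = ((l : ℝ) + 1)⁻¹ •
      ((∑ i : Fin l, a i • EuclideanSpace.single i.castSucc (1 : ℝ))
        + EuclideanSpace.single (Fin.last l) (1 : ℝ))) :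
    T.ncard = 2 * (l + 1) + m - (l + 1) ∧ ‖‖t‖⁻¹ • t‖ = 1 ∧
      ∀ x ∈ T, @inner ℝ _ _ (‖t‖⁻¹ • t) x ≥ 1 / Real.sqrt ((l : ℝ) + 1) :=
  satisfying_assignment_gives_margin_general l m α hα var sgn hsgn a ha q hq hqinj hsat S T hS hT t
    ht
end

section
/- If the 3-SAT instance Γ has no satisfying assignment, then for every subset T ⊆ P_Γ with |T| = n − z and every h > 0 such that T is separated from the origin with margin width h, one has h ≤ √(12α²·u/(12α² + u)) where u = 1/(l+1); in particular h < 1/√(l+1). -/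
/-!
If `T` has margin `h > 0` with respect to a unit vector `w`, it cannot contain both `x` and `-x`.
Hence `T` meets `U` in at most `l + 1` points and `Q` in at most `m`, so `|T| = (l + 1) + m` forces
`T` to contain all of `Q` together with exactly one of `±eᵢ` for every `i`. The chosen signs give
an assignment with `h ≤ aᵢ wᵢ`; as `Γ` is unsatisfiable some clause `j` is falsified, i.e.
`sᵢ wᵢ ≤ -h` for its three literals, so `h ≤ ⟪w, q_j⟫ ≤ -3αh + 3α w_{l+1}`. Together with
`l h² + w_{l+1}² ≤ ‖w‖² = 1` this bounds `h`.
-/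

open Set
open scoped RealInnerProductSpace

section Margin

variable {E : Type*} [NormedAddCommGroup E] [InnerProductSpace ℝ E]

theorem neg_notMem_of_forall_le_inner {T : Set E} {w : E} {h : ℝ} (hh : 0 < h)
    (hT : ∀ x ∈ T, h ≤ ⟪w, x⟫) {x : E} (hx : x ∈ T) : -x ∉ T := fun hnx => by
  have hpos := hT x hx
  have hneg := hT (-x) hnx
  rw [inner_neg_right] at hneg
  linarith

end Margin

theorem Set.ncard_range_le {α β : Type*} [Finite α] (f : α → β) :
    (range f).ncard ≤ Nat.card α := by
  rw [← Nat.card_coe_set_eq]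
  exact Finite.card_range_le f

theorem Set.subset_and_subset_of_subset_union_of_ncard_add_le {α : Type*} {T A B : Set α}
    (hT : T ⊆ A ∪ B) (hA : A.Finite) (hB : B.Finite) (hcard : A.ncard + B.ncard ≤ T.ncard) :
    A ⊆ T ∧ B ⊆ T := by
  have hsplit : T.ncard ≤ (A ∩ T).ncard + (B ∩ T).ncard := by
    have := ncard_union_le (A ∩ T) (B ∩ T)
    rwa [← union_inter_distrib_right, inter_eq_right.mpr hT] at this
  have hAT := ncard_le_ncard (inter_subset_left : A ∩ T ⊆ A) hA
  have hBT := ncard_le_ncard (inter_subset_left : B ∩ T ⊆ B) hB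
  exact ⟨inter_eq_left.mp (eq_of_subset_of_ncard_le inter_subset_left (by omega) hA),
    inter_eq_left.mp (eq_of_subset_of_ncard_le inter_subset_left (by omega) hB)⟩

section EuclideanSpace

variable {ι : Type*} [Fintype ι] [DecidableEq ι]

theorem EuclideanSpace.inner_sum_smul_single {K : Type*} [Fintype K] (w : EuclideanSpace ℝ ι)
    (c : K → ℝ) (f : K → ι) :
    ⟪w, ∑ k, c k • EuclideanSpace.single (f k) (1 : ℝ)⟫ = ∑ k, c k * w (f k) := by
  simp [inner_sum, real_inner_smul_right, EuclideanSpace.inner_single_right]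

theorem exists_signs_of_forall_le_inner {T Q : Set (EuclideanSpace ℝ ι)} (hQ : Q.Finite)
    (hT : T ⊆ {x | ∃ i : ι,
      x = EuclideanSpace.single i (1 : ℝ) ∨ x = -EuclideanSpace.single i (1 : ℝ)} ∪ Q)
    (hcard : Fintype.card ι + Q.ncard ≤ T.ncard) {w : EuclideanSpace ℝ ι} {h : ℝ} (hh : 0 < h)
    (hw : ∀ x ∈ T, h ≤ ⟪w, x⟫) :
    Q ⊆ T ∧ ∃ a : ι → ℝ, (∀ i, a i = 1 ∨ a i = -1) ∧ ∀ i, h ≤ a i * w i := by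
  classical
  set a : ι → ℝ := fun i => if EuclideanSpace.single i (1 : ℝ) ∈ T then 1 else -1
  have ha : ∀ i, a i = 1 ∨ a i = -1 := fun i => by
    by_cases hi : EuclideanSpace.single i (1 : ℝ) ∈ T <;> simp [a, hi]
  have hTa : T ⊆ range (fun i => EuclideanSpace.single i (a i)) ∪ Q := by
    intro x hx
    rcases hT hx with ⟨i, rfl | rfl⟩ | hxQ
    · exact Or.inl ⟨i, by simp [a, hx]⟩
    · have hi : EuclideanSpace.single i (1 : ℝ) ∉ T := fun hi =>
        neg_notMem_of_forall_le_inner hh hw hi hx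
      exact Or.inl ⟨i, by simp [a, hi, PiLp.single_neg]⟩
    · exact Or.inr hxQ
  obtain ⟨hrange, hQT⟩ := subset_and_subset_of_subset_union_of_ncard_add_le hTa
    (finite_range _) hQ
    ((Nat.add_le_add_right ((ncard_range_le _).trans_eq Nat.card_eq_fintype_card) _).trans hcard)
  refine ⟨hQT, a, ha, fun i => ?_⟩
  simpa [EuclideanSpace.inner_single_right, mul_comm] using hw _ (hrange (mem_range_self i))

theorem natCast_mul_sq_add_sq_last_le {l : ℕ} {w : EuclideanSpace ℝ (Fin (l + 1))} (hw : ‖w‖ = 1)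
    {h : ℝ} (hwh : ∀ i : Fin l, h ^ 2 ≤ w i.castSucc ^ 2) : l * h ^ 2 + w (Fin.last l) ^ 2 ≤ 1 := by
  have hsum : ∑ i : Fin l, w i.castSucc ^ 2 + w (Fin.last l) ^ 2 = 1 := by
    rw [← Fin.sum_univ_castSucc (fun i => w i ^ 2), ← EuclideanSpace.real_norm_sq_eq, hw, one_pow]
  have hle : ∑ _i : Fin l, h ^ 2 ≤ ∑ i : Fin l, w i.castSucc ^ 2 :=
    Finset.sum_le_sum fun i _ => hwh i
  simp only [Finset.sum_const, Finset.card_univ, Fintype.card_fin, nsmul_eq_mul] at hle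
  linarith

end EuclideanSpace

theorem exists_forall_eq_neg_of_not_forall_exists_eq {C K V : Type*} {var : C → K → V}
    {sgn : C → K → ℝ} (hsgn : ∀ j k, sgn j k = 1 ∨ sgn j k = -1) {a : V → ℝ}
    (ha : ∀ v, a v = 1 ∨ a v = -1) (hunsat : ¬ ∀ j, ∃ k, a (var j k) = sgn j k) :
    ∃ j, ∀ k, a (var j k) = -sgn j k := by
  push Not at hunsat
  obtain ⟨j, hj⟩ := hunsat
  exact ⟨j, fun k => by grind [ha (var j k), hsgn j k, hj k]⟩

/-- `(4 / 3) (1 + 3α)² ≥ 12α² + 1`, so `hc` gives `12α² c² ≥ (12α² + 1) h²`. -/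
theorem sq_mul_le_of_mul_le_of_add_sq_le {l α h c : ℝ} (hα : 0 < α) (hh : 0 < h)
    (hc : h * (1 + 3 * α) ≤ 3 * α * c) (hnorm : l * h ^ 2 + c ^ 2 ≤ 1) :
    h ^ 2 * (12 * α ^ 2 * (l + 1) + 1) ≤ 12 * α ^ 2 := by
  have hcsq : (h * (1 + 3 * α)) ^ 2 ≤ (3 * α * c) ^ 2 := pow_le_pow_left₀ (by positivity) hc 2
  nlinarith [mul_pos hα hh, sq_nonneg α]

theorem le_sqrt_and_lt_one_div_sqrt {L α h : ℝ} (hL : 0 < L) (hh : 0 < h)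
    (hsq : h ^ 2 * (12 * α ^ 2 * L + 1) ≤ 12 * α ^ 2) :
    h ≤ Real.sqrt (12 * α ^ 2 * (1 / L) / (12 * α ^ 2 + 1 / L)) ∧ h < 1 / Real.sqrt L := by
  have hfrac : 12 * α ^ 2 * (1 / L) / (12 * α ^ 2 + 1 / L) = 12 * α ^ 2 / (12 * α ^ 2 * L + 1) := by
    field_simp
  refine ⟨?_, ?_⟩
  · rw [hfrac, Real.le_sqrt hh.le (by positivity), le_div_iff₀ (by positivity)]
    exact hsq
  · rw [one_div, ← Real.sqrt_inv, Real.lt_sqrt hh.le, ← one_div, lt_div_iff₀ hL]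
    nlinarith [mul_pos hh hh]

theorem unsatisfiable_margin_upper_bound_general
    (l m : ℕ) (α : ℝ) (hα : 1 / 2 < α)
    -- the 3-SAT instance: clause j has literals (var j k, sgn j k) for k : Fin 3
    (var : Fin m → Fin 3 → Fin l) (sgn : Fin m → Fin 3 → ℝ)
    (hsgn : ∀ j k, sgn j k = 1 ∨ sgn j k = -1)
    -- the points q_j
    (q : Fin m → EuclideanSpace ℝ (Fin (l + 1)))
    (hq : ∀ j, q j =
      (∑ k : Fin 3, (sgn j k * α) • EuclideanSpace.single ((var j k).castSucc) (1 : ℝ))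
        + (3 * α) • EuclideanSpace.single (Fin.last l) (1 : ℝ))
    -- the point sets U, Q and P_Γ = U ∪ Q
    (U Q PΓ : Set (EuclideanSpace ℝ (Fin (l + 1))))
    (hU : U = {x | ∃ i : Fin (l + 1),
      x = EuclideanSpace.single i (1 : ℝ) ∨ x = -EuclideanSpace.single i (1 : ℝ)})
    (hQ : Q = Set.range q)
    (hP : PΓ = U ∪ Q)
    (n z : ℕ) (hn : n = 2 * (l + 1) + m) (hz : z = l + 1)
    -- Γ has no satisfying assignment
    (hunsat : ¬ ∃ a : Fin l → ℝ, (∀ i, a i = 1 ∨ a i = -1) ∧ ∀ j : Fin m, ∃ k : Fin 3,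
      a (var j k) = sgn j k)
    -- T ⊆ P_Γ with |T| = n - z, separated from the origin with margin width h > 0
    (T : Set (EuclideanSpace ℝ (Fin (l + 1)))) (hT : T ⊆ PΓ) (hTcard : T.ncard = n - z)
    (h : ℝ) (hh : 0 < h)
    (hsep : ∃ w : EuclideanSpace ℝ (Fin (l + 1)), ‖w‖ = 1 ∧ ∀ x ∈ T, @inner ℝ _ _ w x ≥ h) :
    h ≤ Real.sqrt (12 * α ^ 2 * (1 / ((l : ℝ) + 1)) / (12 * α ^ 2 + 1 / ((l : ℝ) + 1))) ∧
      h < 1 / Real.sqrt ((l : ℝ) + 1) := by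
  obtain ⟨w, hw1, hw⟩ := hsep
  subst hU hQ hP
  have hcard : Fintype.card (Fin (l + 1)) + (range q).ncard ≤ T.ncard := by
    have := ncard_range_le q
    rw [Nat.card_fin] at this
    rw [Fintype.card_fin, hTcard, hn, hz]
    omega
  obtain ⟨hqT, a, ha, haw⟩ := exists_signs_of_forall_le_inner (finite_range q) hT hcard hh hw
  obtain ⟨j, hj⟩ := exists_forall_eq_neg_of_not_forall_exists_eq hsgn
    (a := fun i => a i.castSucc) (fun i => ha _) (fun hsat => hunsat ⟨_, fun i => ha _, hsat⟩)
  have hlit : ∀ k, sgn j k * w (var j k).castSucc ≤ -h := fun k => by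
    have := haw (var j k).castSucc
    rw [hj k] at this
    linarith
  have hlast : h * (1 + 3 * α) ≤ 3 * α * w (Fin.last l) := by
    have hqj := hw (q j) (hqT (mem_range_self j))
    rw [hq j, inner_add_right, EuclideanSpace.inner_sum_smul_single, real_inner_smul_right,
      EuclideanSpace.inner_single_right, conj_trivial, one_mul, Fin.sum_univ_three] at hqj
    have hα0 : 0 ≤ α := by linarith
    nlinarith [mul_le_mul_of_nonneg_left (hlit 0) hα0, mul_le_mul_of_nonneg_left (hlit 1) hα0,
      mul_le_mul_of_nonneg_left (hlit 2) hα0]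
  have hsq : ∀ i, h ^ 2 ≤ w i ^ 2 := fun i => by
    have hwi := haw i
    rcases ha i with hai | hai <;> rw [hai] at hwi <;> nlinarith
  have hnorm := natCast_mul_sq_add_sq_last_le hw1 fun i => hsq i.castSucc
  exact le_sqrt_and_lt_one_div_sqrt (by positivity) hh
    (sq_mul_le_of_mul_le_of_add_sq_le (by linarith) hh hlast hnorm)

/-- If the 3-SAT instance `Γ` has no satisfying assignment, then for every subset
`T ⊆ P_Γ` with `|T| = n − z` and every `h > 0` such that `T` is separated from the origin with
margin width `h`, one has `h ≤ √(12α²·u/(12α² + u))` where `u = 1/(l+1)`; in particular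
`h < 1/√(l+1)`. -/
theorem unsatisfiable_margin_upper_bound
    (l m : ℕ) (hl : 1 ≤ l) (hm : 1 ≤ m) (α : ℝ) (hα : 1 / 2 < α)
    -- the 3-SAT instance: clause j has literals (var j k, sgn j k) for k : Fin 3
    (var : Fin m → Fin 3 → Fin l) (sgn : Fin m → Fin 3 → ℝ)
    (hsgn : ∀ j k, sgn j k = 1 ∨ sgn j k = -1)
    (hvar : ∀ j, Function.Injective (var j))
    -- the points q_j
    (q : Fin m → EuclideanSpace ℝ (Fin (l + 1)))
    (hq : ∀ j, q j =
      (∑ k : Fin 3, (sgn j k * α) • EuclideanSpace.single ((var j k).castSucc) (1 : ℝ))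
        + (3 * α) • EuclideanSpace.single (Fin.last l) (1 : ℝ))
    (hqinj : Function.Injective q)
    -- the point sets U, Q and P_Γ = U ∪ Q
    (U Q PΓ : Set (EuclideanSpace ℝ (Fin (l + 1))))
    (hU : U = {x | ∃ i : Fin (l + 1),
      x = EuclideanSpace.single i (1 : ℝ) ∨ x = -EuclideanSpace.single i (1 : ℝ)})
    (hQ : Q = Set.range q)
    (hP : PΓ = U ∪ Q)
    (n z : ℕ) (hn : n = 2 * (l + 1) + m) (hz : z = l + 1)
    -- Γ has no satisfying assignment
    (hunsat : ¬ ∃ a : Fin l → ℝ, (∀ i, a i = 1 ∨ a i = -1) ∧ ∀ j : Fin m, ∃ k : Fin 3,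
      a (var j k) = sgn j k)
    -- T ⊆ P_Γ with |T| = n - z, separated from the origin with margin width h > 0
    (T : Set (EuclideanSpace ℝ (Fin (l + 1)))) (hT : T ⊆ PΓ) (hTcard : T.ncard = n - z)
    (h : ℝ) (hh : 0 < h)
    (hsep : ∃ w : EuclideanSpace ℝ (Fin (l + 1)), ‖w‖ = 1 ∧ ∀ x ∈ T, @inner ℝ _ _ w x ≥ h) :
    h ≤ Real.sqrt (12 * α ^ 2 * (1 / ((l : ℝ) + 1)) / (12 * α ^ 2 + 1 / ((l : ℝ) + 1))) ∧
      h < 1 / Real.sqrt ((l : ℝ) + 1) :=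
  unsatisfiable_margin_upper_bound_general l m α hα var sgn hsgn q hq U Q PΓ hU hQ hP n z hn hz
    hunsat T hT hTcard h hh hsep
end

section
/- If the assignment a satisfies the clause E_j (i.e., some literal (i,s) of E_j has a(i) = s), then ⟨q_j, t_a/‖t_a‖⟩ ≥ 2α/√(l+1) > 1/√(l+1). -/
/-!
Up to the factor `(l + 1)⁻¹`, the centroid `t_a` is the `±1`-vector `(a, 1)`, of norm `√(l + 1)`,
so `⟨q_j, t_a / ‖t_a‖⟩ = α (∑ₖ sₖ a(iₖ) + 3) / √(l + 1)`. Every literal contributes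
`sₖ a(iₖ) ≥ -1` and a satisfied one contributes `1`, so the bracket is at least `2`.
-/

open Finset

theorem EuclideanSpace.sum_smul_single_castSucc_add_single_last {𝕜 : Type*} [RCLike 𝕜]
    {n : ℕ} (v : Fin n → 𝕜) (c : 𝕜) :
    ∑ i, v i • EuclideanSpace.single i.castSucc (1 : 𝕜) + EuclideanSpace.single (Fin.last n) c
      = WithLp.toLp 2 (Fin.snoc v c : Fin (n + 1) → 𝕜) := by
  ext j
  refine Fin.lastCases ?_ (fun i => ?_) j
  · simp [(Fin.castSucc_lt_last _).ne']
  · simp [(Fin.castSucc_lt_last _).ne, Pi.single_apply, Fin.castSucc_inj]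

theorem EuclideanSpace.norm_eq_sqrt_card_of_forall_norm_eq_one {𝕜 ι : Type*} [RCLike 𝕜]
    [Fintype ι] {x : EuclideanSpace 𝕜 ι} (hx : ∀ i, ‖x i‖ = 1) :
    ‖x‖ = √(Fintype.card ι) := by
  simp [EuclideanSpace.norm_eq, hx]

theorem le_sum_of_neg_one_le_of_exists_eq_one {ι : Type*} [Fintype ι] {f : ι → ℝ}
    (hf : ∀ i, -1 ≤ f i) (h : ∃ i, f i = 1) : 2 - Fintype.card ι ≤ ∑ i, f i := by
  obtain ⟨i, hi⟩ := h
  have : f i + 1 ≤ ∑ j, (f j + 1) :=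
    single_le_sum (f := fun j => f j + 1) (fun j _ => by linarith [hf j]) (mem_univ i)
  rw [sum_add_distrib, sum_const, card_univ, nsmul_one] at this
  linarith

theorem inv_norm_smul_smul_of_pos {E : Type*} [NormedAddCommGroup E] [NormedSpace ℝ E]
    {c : ℝ} (hc : 0 < c) (x : E) : ‖c • x‖⁻¹ • c • x = ‖x‖⁻¹ • x := by
  rw [norm_smul, Real.norm_of_nonneg hc.le, smul_smul, mul_inv, mul_right_comm,
    inv_mul_cancel₀ hc.ne', one_mul]

theorem satisfied_clause_inner_lower_bound_general
    (l : ℕ) (α : ℝ) (hα : 1 / 2 < α)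
    -- the clause E_j: literals (var k, sgn k) for k : Fin 3, on pairwise distinct variables
    (var : Fin 3 → Fin l) (sgn : Fin 3 → ℝ)
    (hsgn : ∀ k, sgn k = 1 ∨ sgn k = -1)
    -- the assignment
    (a : Fin l → ℝ) (ha : ∀ i, a i = 1 ∨ a i = -1)
    -- the point q_j
    (q : EuclideanSpace ℝ (Fin (l + 1)))
    (hq : q = (∑ k : Fin 3, (sgn k * α) • EuclideanSpace.single ((var k).castSucc) (1 : ℝ))
        + (3 * α) • EuclideanSpace.single (Fin.last l) (1 : ℝ))
    -- the centroid t_a of S_a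
    (t : EuclideanSpace ℝ (Fin (l + 1)))
    (ht : t = ((l : ℝ) + 1)⁻¹ •
      ((∑ i : Fin l, a i • EuclideanSpace.single i.castSucc (1 : ℝ))
        + EuclideanSpace.single (Fin.last l) (1 : ℝ)))
    -- a satisfies the clause E_j
    (hsat : ∃ k : Fin 3, a (var k) = sgn k) :
    @inner ℝ _ _ q (‖t‖⁻¹ • t) ≥ 2 * α / Real.sqrt ((l : ℝ) + 1) ∧
      2 * α / Real.sqrt ((l : ℝ) + 1) > 1 / Real.sqrt ((l : ℝ) + 1) := by
  set u : EuclideanSpace ℝ (Fin (l + 1)) := WithLp.toLp 2 (Fin.snoc a 1)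
  have hL : (0 : ℝ) < l + 1 := by positivity
  have hu : ‖u‖ = √((l : ℝ) + 1) := by
    rw [EuclideanSpace.norm_eq_sqrt_card_of_forall_norm_eq_one, Fintype.card_fin, Nat.cast_succ]
    refine Fin.lastCases ?_ fun i => ?_
    · simp [u]
    · rcases ha i with h | h <;> simp [u, h]
  have hinner : inner ℝ q u = α * ∑ k, sgn k * a (var k) + 3 * α := by
    simp only [hq, inner_add_left, sum_inner, inner_smul_left, Real.ringHom_apply,
      EuclideanSpace.inner_single_left, Fin.snoc_castSucc, one_mul, Fin.snoc_last, mul_one, mul_sum,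
      add_left_inj, u]
    exact sum_congr rfl fun k _ => by ring
  have hclause : -1 ≤ ∑ k, sgn k * a (var k) := by
    have hlit : ∀ k, -1 ≤ sgn k * a (var k) := fun k => by
      rcases hsgn k with h | h <;> rcases ha (var k) with h' | h' <;> norm_num [h, h']
    obtain ⟨k, hk⟩ := hsat
    have hk_one : sgn k * a (var k) = 1 := by rw [hk]; rcases hsgn k with h | h <;> norm_num [h]
    have := le_sum_of_neg_one_le_of_exists_eq_one hlit ⟨k, hk_one⟩
    norm_num at this
    linarith
  have hs : 0 < √((l : ℝ) + 1) := Real.sqrt_pos.2 hL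
  rw [ht, EuclideanSpace.sum_smul_single_castSucc_add_single_last,
    inv_norm_smul_smul_of_pos (inv_pos.2 hL), inner_smul_right, hinner, hu, inv_mul_eq_div]
  constructor
  · exact div_le_div_of_nonneg_right (by nlinarith) hs.le
  · exact div_lt_div_of_pos_right (by linarith) hs

/-- If the assignment `a` satisfies the clause `E_j` (i.e., some literal `(i,s)` of
`E_j` has `a(i) = s`), then `⟨q_j, t_a/‖t_a‖⟩ ≥ 2α/√(l+1) > 1/√(l+1)`. -/
theorem satisfied_clause_inner_lower_bound
    (l : ℕ) (hl : 1 ≤ l) (α : ℝ) (hα : 1 / 2 < α)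
    -- the clause E_j: literals (var k, sgn k) for k : Fin 3, on pairwise distinct variables
    (var : Fin 3 → Fin l) (sgn : Fin 3 → ℝ)
    (hsgn : ∀ k, sgn k = 1 ∨ sgn k = -1)
    (hvar : Function.Injective var)
    -- the assignment
    (a : Fin l → ℝ) (ha : ∀ i, a i = 1 ∨ a i = -1)
    -- the point q_j
    (q : EuclideanSpace ℝ (Fin (l + 1)))
    (hq : q = (∑ k : Fin 3, (sgn k * α) • EuclideanSpace.single ((var k).castSucc) (1 : ℝ))
        + (3 * α) • EuclideanSpace.single (Fin.last l) (1 : ℝ))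
    -- the centroid t_a of S_a
    (t : EuclideanSpace ℝ (Fin (l + 1)))
    (ht : t = ((l : ℝ) + 1)⁻¹ •
      ((∑ i : Fin l, a i • EuclideanSpace.single i.castSucc (1 : ℝ))
        + EuclideanSpace.single (Fin.last l) (1 : ℝ)))
    -- a satisfies the clause E_j
    (hsat : ∃ k : Fin 3, a (var k) = sgn k) :
    @inner ℝ _ _ q (‖t‖⁻¹ • t) ≥ 2 * α / Real.sqrt ((l : ℝ) + 1) ∧
      2 * α / Real.sqrt ((l : ℝ) + 1) > 1 / Real.sqrt ((l : ℝ) + 1) :=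
  satisfied_clause_inner_lower_bound_general l α hα var sgn hsgn a ha q hq t ht hsat
end

section
/- If the assignment a falsifies the clause E_j (i.e., every literal (i,s) of E_j has a(i) ≠ s), then ⟨q_j, t_a⟩ ≤ 0. -/
lemma inner_sum_smul_single_left {ι κ : Type*} [Fintype ι] [DecidableEq ι] (s : Finset κ)
    (f : κ → ι) (c : κ → ℝ) (w : EuclideanSpace ℝ ι) :
    inner ℝ (∑ k ∈ s, c k • EuclideanSpace.single (f k) (1 : ℝ)) w = ∑ k ∈ s, c k * w (f k) := by
  simp [sum_inner, real_inner_smul_left, EuclideanSpace.inner_single_left]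

lemma sum_smul_single_castSucc_apply_castSucc {𝕜 : Type*} [RCLike 𝕜] {l : ℕ} (a : Fin l → 𝕜)
    (i : Fin l) : (∑ j : Fin l, a j • EuclideanSpace.single j.castSucc (1 : 𝕜)) i.castSucc = a i := by
  simp [WithLp.ofLp_sum, Pi.single_apply]

lemma sum_smul_single_castSucc_apply_last {𝕜 : Type*} [RCLike 𝕜] {l : ℕ} (a : Fin l → 𝕜) :
    (∑ j : Fin l, a j • EuclideanSpace.single j.castSucc (1 : 𝕜)) (Fin.last l) = 0 := by
  simp [WithLp.ofLp_sum, (Fin.castSucc_ne_last _).symm]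

lemma mul_eq_neg_one_of_sign_of_ne {R : Type*} [Ring R] {x s : R} (hx : x = 1 ∨ x = -1)
    (hs : s = 1 ∨ s = -1) (hne : x ≠ s) : x * s = -1 := by
  rcases hx with rfl | rfl <;> rcases hs with rfl | rfl <;> norm_num at *

theorem falsified_clause_inner_nonpos_general
    (l : ℕ) (α : ℝ)
    -- the clause E_j: literals (var k, sgn k) for k : Fin 3, on pairwise distinct variables
    (var : Fin 3 → Fin l) (sgn : Fin 3 → ℝ)
    (hsgn : ∀ k, sgn k = 1 ∨ sgn k = -1)
    -- the assignment
    (a : Fin l → ℝ) (ha : ∀ i, a i = 1 ∨ a i = -1)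
    -- the point q_j
    (q : EuclideanSpace ℝ (Fin (l + 1)))
    (hq : q = (∑ k : Fin 3, (sgn k * α) • EuclideanSpace.single ((var k).castSucc) (1 : ℝ))
        + (3 * α) • EuclideanSpace.single (Fin.last l) (1 : ℝ))
    -- the centroid t_a of S_a
    (t : EuclideanSpace ℝ (Fin (l + 1)))
    (ht : t = ((l : ℝ) + 1)⁻¹ •
      ((∑ i : Fin l, a i • EuclideanSpace.single i.castSucc (1 : ℝ))
        + EuclideanSpace.single (Fin.last l) (1 : ℝ)))
    -- a falsifies the clause E_j
    (hfalse : ∀ k : Fin 3, a (var k) ≠ sgn k) :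
    @inner ℝ _ _ q t ≤ 0 := by
  have hlit : ∀ k, a (var k) * sgn k = -1 := fun k =>
    mul_eq_neg_one_of_sign_of_ne (ha _) (hsgn k) (hfalse k)
  have ht_var : ∀ k, t (var k).castSucc = ((l : ℝ) + 1)⁻¹ * a (var k) := by
    simp [ht, sum_smul_single_castSucc_apply_castSucc]
  have ht_last : t (Fin.last l) = ((l : ℝ) + 1)⁻¹ := by
    simp [ht, sum_smul_single_castSucc_apply_last]
  -- each falsified literal contributes `-α / (l + 1)`, cancelling the last coordinate's `3α / (l + 1)`
  have hzero : inner ℝ q t = 0 := by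
    rw [hq, inner_add_left, inner_sum_smul_single_left, real_inner_smul_left,
      EuclideanSpace.inner_single_left, ht_last]
    simp only [ht_var, Fin.sum_univ_three, map_one]
    linear_combination (α * ((l : ℝ) + 1)⁻¹) * (hlit 0 + hlit 1 + hlit 2)
  exact hzero.le

/-- If the assignment `a` falsifies the clause `E_j` (i.e., every literal `(i,s)` of
`E_j` has `a(i) ≠ s`), then `⟨q_j, t_a⟩ ≤ 0`. -/
theorem falsified_clause_inner_nonpos
    (l : ℕ) (hl : 1 ≤ l) (α : ℝ) (hα : 1 / 2 < α)
    -- the clause E_j: literals (var k, sgn k) for k : Fin 3, on pairwise distinct variables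
    (var : Fin 3 → Fin l) (sgn : Fin 3 → ℝ)
    (hsgn : ∀ k, sgn k = 1 ∨ sgn k = -1)
    (hvar : Function.Injective var)
    -- the assignment
    (a : Fin l → ℝ) (ha : ∀ i, a i = 1 ∨ a i = -1)
    -- the point q_j
    (q : EuclideanSpace ℝ (Fin (l + 1)))
    (hq : q = (∑ k : Fin 3, (sgn k * α) • EuclideanSpace.single ((var k).castSucc) (1 : ℝ))
        + (3 * α) • EuclideanSpace.single (Fin.last l) (1 : ℝ))
    -- the centroid t_a of S_a
    (t : EuclideanSpace ℝ (Fin (l + 1)))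
    (ht : t = ((l : ℝ) + 1)⁻¹ •
      ((∑ i : Fin l, a i • EuclideanSpace.single i.castSucc (1 : ℝ))
        + EuclideanSpace.single (Fin.last l) (1 : ℝ)))
    -- a falsifies the clause E_j
    (hfalse : ∀ k : Fin 3, a (var k) ≠ sgn k) :
    @inner ℝ _ _ q t ≤ 0 :=
  falsified_clause_inner_nonpos_general l α var sgn hsgn a ha q hq t ht hfalse
end

section
/- Let H be a real inner product space, let q, t ∈ H be nonzero vectors with ⟨q, t⟩ ≤ 0, and suppose there exist w ∈ H with ‖w‖ = 1 and h ∈ ℝ such that ⟨w, q⟩ ≥ h and ⟨w, t⟩ ≥ h. Then h ≤ ‖q‖·‖t‖/√(‖q‖² + ‖t‖²), and moreover ‖q‖·‖t‖/√(‖q‖² + ‖t‖²) < ‖t‖. -/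
open Real RealInnerProductSpace

theorem norm_smul_add_smul_sq_le_of_inner_nonpos {H : Type*} [NormedAddCommGroup H]
    [InnerProductSpace ℝ H] {x y : H} (hxy : ⟪x, y⟫ ≤ 0) {a b : ℝ} (hab : 0 ≤ a * b) :
    ‖a • x + b • y‖ ^ 2 ≤ a ^ 2 * ‖x‖ ^ 2 + b ^ 2 * ‖y‖ ^ 2 := by
  have hexpand : ‖a • x + b • y‖ ^ 2 = a ^ 2 * ‖x‖ ^ 2 + 2 * (a * b) * ⟪x, y⟫ + b ^ 2 * ‖y‖ ^ 2 := by
    rw [norm_add_sq_real, norm_smul, norm_smul, real_inner_smul_left, real_inner_smul_right,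
      mul_pow, mul_pow, Real.norm_eq_abs, Real.norm_eq_abs, sq_abs, sq_abs]
    ring
  nlinarith [mul_nonpos_of_nonneg_of_nonpos hab hxy]

/-- Test `w` against `‖t‖² • q + ‖q‖² • t`: its inner product with `w` is at least
`h (‖q‖² + ‖t‖²)`, and the obtuse angle bounds its norm by `‖q‖ ‖t‖ √(‖q‖² + ‖t‖²)`. -/
theorem mul_sqrt_norm_sq_add_norm_sq_le_of_inner_nonpos {H : Type*} [NormedAddCommGroup H]
    [InnerProductSpace ℝ H] {q t w : H} {h : ℝ} (hqt : ⟪q, t⟫ ≤ 0) (hw : ‖w‖ ≤ 1)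
    (hwq : h ≤ ⟪w, q⟫) (hwt : h ≤ ⟪w, t⟫) :
    h * √(‖q‖ ^ 2 + ‖t‖ ^ 2) ≤ ‖q‖ * ‖t‖ := by
  set Q := ‖q‖
  set T := ‖t‖
  set S := √(Q ^ 2 + T ^ 2)
  have hS : S ^ 2 = Q ^ 2 + T ^ 2 := sq_sqrt (by positivity)
  set v := T ^ 2 • q + Q ^ 2 • t
  have hv : ‖v‖ ≤ Q * T * S := by
    refine (pow_le_pow_iff_left₀ (norm_nonneg v) (by positivity) two_ne_zero).1 ?_
    calc ‖v‖ ^ 2 ≤ (T ^ 2) ^ 2 * Q ^ 2 + (Q ^ 2) ^ 2 * T ^ 2 :=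
          norm_smul_add_smul_sq_le_of_inner_nonpos hqt (by positivity)
      _ = (Q * T * S) ^ 2 := by rw [mul_pow, hS]; ring
  have hmargin : h * S * S ≤ Q * T * S :=
    calc h * S * S = T ^ 2 * h + Q ^ 2 * h := by rw [mul_assoc, ← sq, hS]; ring
      _ ≤ T ^ 2 * ⟪w, q⟫ + Q ^ 2 * ⟪w, t⟫ := by gcongr
      _ = ⟪w, v⟫ := by rw [inner_add_right, real_inner_smul_right, real_inner_smul_right]
      _ ≤ ‖w‖ * ‖v‖ := real_inner_le_norm w v
      _ ≤ 1 * ‖v‖ := by gcongr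
      _ ≤ Q * T * S := by rw [one_mul]; exact hv
  rcases (show 0 ≤ S from sqrt_nonneg _).eq_or_lt with hS0 | hS0
  · rw [← hS0, mul_zero]
    positivity
  · exact le_of_mul_le_mul_right hmargin hS0

theorem mul_div_sqrt_sq_add_sq_lt {a b : ℝ} (hb : 0 < b) : a * b / √(a ^ 2 + b ^ 2) < b := by
  have hS : 0 < √(a ^ 2 + b ^ 2) := sqrt_pos.2 (by positivity)
  have ha : a < √(a ^ 2 + b ^ 2) := lt_sqrt_of_sq_lt (lt_add_of_pos_right _ (pow_pos hb 2))
  rw [div_lt_iff₀ hS, mul_comm]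
  exact mul_lt_mul_of_pos_left ha hb

theorem margin_bound_of_obtuse_general
    {H : Type*} [NormedAddCommGroup H] [InnerProductSpace ℝ H]
    (q t : H) (ht : t ≠ 0)
    (hqt : @inner ℝ _ _ q t ≤ 0)
    (w : H) (hw : ‖w‖ = 1) (h : ℝ)
    (hwq : @inner ℝ _ _ w q ≥ h) (hwt : @inner ℝ _ _ w t ≥ h) :
    h ≤ ‖q‖ * ‖t‖ / Real.sqrt (‖q‖ ^ 2 + ‖t‖ ^ 2) ∧
      ‖q‖ * ‖t‖ / Real.sqrt (‖q‖ ^ 2 + ‖t‖ ^ 2) < ‖t‖ := by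
  have hT : 0 < ‖t‖ := norm_pos_iff.2 ht
  have hS : 0 < √(‖q‖ ^ 2 + ‖t‖ ^ 2) := sqrt_pos.2 (by positivity)
  exact ⟨(le_div_iff₀ hS).2 (mul_sqrt_norm_sq_add_norm_sq_le_of_inner_nonpos hqt hw.le hwq hwt),
    mul_div_sqrt_sq_add_sq_lt hT⟩

/-- Let `H` be a real inner product space, let `q, t ∈ H` be nonzero vectors with
`⟨q, t⟩ ≤ 0`, and suppose there exist `w ∈ H` with `‖w‖ = 1` and `h ∈ ℝ` such that `⟨w, q⟩ ≥ h`
and `⟨w, t⟩ ≥ h`. Then `h ≤ ‖q‖·‖t‖/√(‖q‖² + ‖t‖²)`, and moreover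
`‖q‖·‖t‖/√(‖q‖² + ‖t‖²) < ‖t‖`. -/
theorem margin_bound_of_obtuse
    {H : Type*} [NormedAddCommGroup H] [InnerProductSpace ℝ H]
    (q t : H) (hq : q ≠ 0) (ht : t ≠ 0)
    (hqt : @inner ℝ _ _ q t ≤ 0)
    (w : H) (hw : ‖w‖ = 1) (h : ℝ)
    (hwq : @inner ℝ _ _ w q ≥ h) (hwt : @inner ℝ _ _ w t ≥ h) :
    h ≤ ‖q‖ * ‖t‖ / Real.sqrt (‖q‖ ^ 2 + ‖t‖ ^ 2) ∧
      ‖q‖ * ‖t‖ / Real.sqrt (‖q‖ ^ 2 + ‖t‖ ^ 2) < ‖t‖ :=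
  margin_bound_of_obtuse_general q t ht hqt w hw h hwq hwt
end

section
/- Let T ⊆ P_Γ with |T| = n − z, and suppose there exist a unit vector w ∈ ℝ^{l+1} and h > 0 with ⟨w, x⟩ ≥ h for every x ∈ T. Then Q ⊆ T and, for each i ∈ {1,…,l+1}, exactly one of the two points e_i and −e_i belongs to T. -/
/-!
A point set strictly separated from the origin by a hyperplane contains no antipodal pair, so `T`
meets each pair `±e_i` at most once and meets `U` in at most `l + 1` points; it meets `Q` in at
most `m` points. As `T ⊆ U ∪ Q` has exactly `(l + 1) + m` points, both bounds are attained, which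
forces `Q ⊆ T` and `e_i ∈ T ∨ -e_i ∈ T` for every `i`.
-/

open scoped Pointwise

namespace Set

variable {α : Type*} [InvolutiveNeg α] {S A : Set α}

theorem ncard_inter_union_neg_le (hS : ∀ x ∈ S, -x ∉ S) (hA : A.Finite) :
    (S ∩ (A ∪ -A)).ncard ≤ ((S ∪ -S) ∩ A).ncard := by
  have hdisj : Disjoint (S ∩ A) (-S ∩ A) :=
    disjoint_left.2 fun x hx hx' => hS (-x) hx'.1 (by simpa using hx.1)
  calc (S ∩ (A ∪ -A)).ncard = (S ∩ A ∪ S ∩ -A).ncard := by rw [inter_union_distrib_left]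
    _ ≤ (S ∩ A).ncard + (S ∩ -A).ncard := ncard_union_le _ _
    _ = (S ∩ A).ncard + (-S ∩ A).ncard := by rw [← ncard_neg (S ∩ -A), inter_neg, neg_neg]
    _ = (S ∩ A ∪ -S ∩ A).ncard :=
      (ncard_union_eq hdisj (hA.inter_of_right _) (hA.inter_of_right _)).symm
    _ = ((S ∪ -S) ∩ A).ncard := by rw [union_inter_distrib_right]

end Set

theorem neg_notMem_of_forall_inner_pos {E : Type*} [NormedAddCommGroup E] [InnerProductSpace ℝ E]
    {S : Set E} {w : E} (hS : ∀ x ∈ S, 0 < inner ℝ w x) : ∀ x ∈ S, -x ∉ S := fun x hx hx' => by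
  have := hS _ hx'
  rw [inner_neg_right] at this
  linarith [hS x hx]

theorem separated_subset_structure_general
    (l m : ℕ)
    -- the points q_j
    (q : Fin m → EuclideanSpace ℝ (Fin (l + 1)))
    (hqinj : Function.Injective q)
    -- the point sets U, Q and P_Γ = U ∪ Q
    (U Q PΓ : Set (EuclideanSpace ℝ (Fin (l + 1))))
    (hU : U = {x | ∃ i : Fin (l + 1),
      x = EuclideanSpace.single i (1 : ℝ) ∨ x = -EuclideanSpace.single i (1 : ℝ)})
    (hQ : Q = Set.range q)
    (hP : PΓ = U ∪ Q)
    (n z : ℕ) (hn : n = 2 * (l + 1) + m) (hz : z = l + 1)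
    -- T ⊆ P_Γ with |T| = n - z, separated from the origin with margin width h > 0
    (T : Set (EuclideanSpace ℝ (Fin (l + 1)))) (hT : T ⊆ PΓ) (hTcard : T.ncard = n - z)
    (w : EuclideanSpace ℝ (Fin (l + 1))) (h : ℝ) (hh : 0 < h)
    (hsep : ∀ x ∈ T, @inner ℝ _ _ w x ≥ h) :
    Q ⊆ T ∧ ∀ i : Fin (l + 1),
      Xor' (EuclideanSpace.single i (1 : ℝ) ∈ T) (-EuclideanSpace.single i (1 : ℝ) ∈ T) := by
  set A := Set.range fun i : Fin (l + 1) => EuclideanSpace.single i (1 : ℝ)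
  have hT_antipodal : ∀ x ∈ T, -x ∉ T :=
    neg_notMem_of_forall_inner_pos fun x hx => hh.trans_le (hsep x hx)
  have hUA : U = A ∪ -A := by
    ext x
    simp only [hU, A, Set.mem_ofPred_eq, Set.mem_union, Set.mem_range, Set.mem_neg, exists_or,
      eq_comm (b := x), eq_comm (b := -x), neg_eq_iff_eq_neg]
  have hA : A.ncard ≤ l + 1 := by
    simpa using Set.ncard_image_le (f := fun i : Fin (l + 1) => EuclideanSpace.single i (1 : ℝ))
      Set.finite_univ
  have hQm : Q.ncard = m := by rw [hQ, Set.ncard_range_of_injective hqinj, Nat.card_fin]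
  have hTU : (T ∩ U).ncard ≤ ((T ∪ -T) ∩ A).ncard :=
    hUA ▸ Set.ncard_inter_union_neg_le hT_antipodal (Set.finite_range _)
  have hT_split : T.ncard ≤ (T ∩ U).ncard + (T ∩ Q).ncard := by
    conv_lhs => rw [← Set.inter_eq_left.2 (hP ▸ hT : T ⊆ U ∪ Q), Set.inter_union_distrib_left]
    exact Set.ncard_union_le _ _
  have hTA : ((T ∪ -T) ∩ A).ncard ≤ A.ncard :=
    Set.ncard_le_ncard Set.inter_subset_right (Set.finite_range _)
  have hTQ : (T ∩ Q).ncard ≤ Q.ncard :=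
    Set.ncard_le_ncard Set.inter_subset_right (hQ ▸ Set.finite_range q)
  have hA_sub : A ⊆ T ∪ -T := Set.inter_eq_right.1 <|
    Set.eq_of_subset_of_ncard_le Set.inter_subset_right (by omega) (Set.finite_range _)
  have hQ_sub : Q ⊆ T := Set.inter_eq_right.1 <|
    Set.eq_of_subset_of_ncard_le Set.inter_subset_right (by omega) (hQ ▸ Set.finite_range q)
  refine ⟨hQ_sub, fun i => ?_⟩
  rcases hA_sub ⟨i, rfl⟩ with hi | hi
  · exact Or.inl ⟨hi, hT_antipodal _ hi⟩
  · exact Or.inr ⟨hi, by simpa using hT_antipodal _ hi⟩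

/-- Let `T ⊆ P_Γ` with `|T| = n − z`, and suppose there exist a unit vector
`w ∈ ℝ^{l+1}` and `h > 0` with `⟨w, x⟩ ≥ h` for every `x ∈ T`. Then `Q ⊆ T` and, for each
`i ∈ {1,…,l+1}`, exactly one of the two points `e_i` and `−e_i` belongs to `T`. -/
theorem separated_subset_structure
    (l m : ℕ) (hl : 1 ≤ l) (hm : 1 ≤ m) (α : ℝ) (hα : 1 / 2 < α)
    -- the 3-SAT instance: clause j has literals (var j k, sgn j k) for k : Fin 3
    (var : Fin m → Fin 3 → Fin l) (sgn : Fin m → Fin 3 → ℝ)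
    (hsgn : ∀ j k, sgn j k = 1 ∨ sgn j k = -1)
    (hvar : ∀ j, Function.Injective (var j))
    -- the points q_j
    (q : Fin m → EuclideanSpace ℝ (Fin (l + 1)))
    (hq : ∀ j, q j =
      (∑ k : Fin 3, (sgn j k * α) • EuclideanSpace.single ((var j k).castSucc) (1 : ℝ))
        + (3 * α) • EuclideanSpace.single (Fin.last l) (1 : ℝ))
    (hqinj : Function.Injective q)
    -- the point sets U, Q and P_Γ = U ∪ Q
    (U Q PΓ : Set (EuclideanSpace ℝ (Fin (l + 1))))
    (hU : U = {x | ∃ i : Fin (l + 1),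
      x = EuclideanSpace.single i (1 : ℝ) ∨ x = -EuclideanSpace.single i (1 : ℝ)})
    (hQ : Q = Set.range q)
    (hP : PΓ = U ∪ Q)
    (n z : ℕ) (hn : n = 2 * (l + 1) + m) (hz : z = l + 1)
    -- T ⊆ P_Γ with |T| = n - z, separated from the origin with margin width h > 0
    (T : Set (EuclideanSpace ℝ (Fin (l + 1)))) (hT : T ⊆ PΓ) (hTcard : T.ncard = n - z)
    (w : EuclideanSpace ℝ (Fin (l + 1))) (hw : ‖w‖ = 1) (h : ℝ) (hh : 0 < h)
    (hsep : ∀ x ∈ T, @inner ℝ _ _ w x ≥ h) :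
    Q ⊆ T ∧ ∀ i : Fin (l + 1),
      Xor' (EuclideanSpace.single i (1 : ℝ) ∈ T) (-EuclideanSpace.single i (1 : ℝ) ∈ T) :=
  separated_subset_structure_general l m q hqinj U Q PΓ hU hQ hP n z hn hz T hT hTcard w h hh hsep
end
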